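/- Let I ⊂ S = K[x_1,…,x_n] be a monomial ideal and m = (x_1,…,x_n). If m^t I has linear quotients with respect to a degree-increasing admissible order on G(m^t I) for some t ≥ 0, then m^k I has linear quotients for all k ≥ t. -/

import Mathlib

/-! # Framework: monomial ideals in `S = K[x_1,…,x_n]`

Monomials are encoded by their exponent vectors in `Fin n →₀ ℕ`; divisibility of
monomials corresponds to the pointwise order, and `u : v = u / gcd(u,v)` corresponds
to truncated subtraction of exponent vectors. -/

open MvPolynomial

noncomputable section

/-- The graded maximal ideal `m = (x_1, …, x_n)` of `K[x_1,…,x_n]`. -/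
def maxIdeal (n : ℕ) (K : Type) [Field K] : Ideal (MvPolynomial (Fin n) K) :=
  Ideal.span (Set.range X)

/-- Exponent vectors of monomials in `n` variables. -/
abbrev Expo (n : ℕ) := Fin n →₀ ℕ

/-- The monomial `x^s` with exponent vector `s`. -/
def mon (n : ℕ) (K : Type) [Field K] (s : Expo n) : MvPolynomial (Fin n) K :=
  monomial s 1

/-- The degree of the monomial with exponent vector `s`. -/
def mdeg {n : ℕ} (s : Expo n) : ℕ := s.sum fun _ e => e

/-- `I` is a monomial ideal: it is generated by monomials. -/
def IsMonomialIdeal (n : ℕ) (K : Type) [Field K]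
    (I : Ideal (MvPolynomial (Fin n) K)) : Prop :=
  ∃ A : Set (Expo n), I = Ideal.span (mon n K '' A)

/-- `G(I)`: the (exponent vectors of the) minimal monomial generators of `I`, i.e. the
monomials of `I` that are minimal with respect to divisibility. -/
def MinGens (n : ℕ) (K : Type) [Field K] (I : Ideal (MvPolynomial (Fin n) K)) :
    Set (Expo n) :=
  {s | mon n K s ∈ I ∧ ∀ t : Expo n, mon n K t ∈ I → t ≤ s → t = s}

/-- Given an order `u_0 < u_1 < ⋯` on monomials, the colon ideal
`(u_0, …, u_{i-1}) : u_i`. -/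
def colonPrev (n : ℕ) (K : Type) [Field K] {r : ℕ} (u : Fin r → Expo n) (i : Fin r) :
    Ideal (MvPolynomial (Fin n) K) :=
  Submodule.colon (Ideal.span (mon n K '' (u '' {l : Fin r | l < i})))
    (Ideal.span {mon n K (u i)})

/-- The ideal `J` is generated by (a set of) variables. -/
def genByVars (n : ℕ) (K : Type) [Field K] (J : Ideal (MvPolynomial (Fin n) K)) : Prop :=
  ∃ T : Set (Fin n), J = Ideal.span ((fun p => (X p : MvPolynomial (Fin n) K)) '' T)

/-- `u` is an admissible order on `G(J)`: it enumerates the minimal monomial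
generators, and each colon ideal `(u_0,…,u_{i-1}) : u_i` is generated by variables. -/
def IsLinQuotOrder (n : ℕ) (K : Type) [Field K] (J : Ideal (MvPolynomial (Fin n) K))
    {r : ℕ} (u : Fin r → Expo n) : Prop :=
  Function.Injective u ∧ Set.range u = MinGens n K J ∧
    ∀ i : Fin r, genByVars n K (colonPrev n K u i)

/-- `J` has linear quotients. -/
def HasLinearQuotients (n : ℕ) (K : Type) [Field K]
    (J : Ideal (MvPolynomial (Fin n) K)) : Prop :=
  ∃ (r : ℕ) (u : Fin r → Expo n), IsLinQuotOrder n K J u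

/-- The order `u` is degree increasing. -/
def DegIncr {n r : ℕ} (u : Fin r → Expo n) : Prop :=
  ∀ i i' : Fin r, i ≤ i' → mdeg (u i) ≤ mdeg (u i')

/-- The numerical invariant `λ_{I,O,u_i} = Σ_k (deg w_{i,k} - 1)`, where the `w_{i,k}`
are the minimal monomial generators of `(u_0,…,u_{i-1}) : u_i`. -/
def lamOrd (n : ℕ) (K : Type) [Field K] {r : ℕ} (u : Fin r → Expo n) (i : Fin r) : ℕ :=
  ∑ᶠ w ∈ MinGens n K (colonPrev n K u i), (mdeg w - 1)

end

/-! If `u_1 < ⋯ < u_r` is a degree-increasing admissible order on `G(J)`, every minimal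
generator of `mJ` has the form `x_j u_i`; order `G(mJ)` by the least `i` such that `u_i`
properly divides the generator. Let `w' = x_{j'} u_{i'}` come before `w = x_j u_i`. If `i' = i`,
then `x_{j'}` lies in the colon ideal of `w` and divides `w' / gcd(w', w)`. If `i' < i`, linear
quotients of `J` give `x_p` with `x_p u_i ∈ (u_1, …, u_{i-1})` and
`x_p ∣ u_{i'} / gcd(u_{i'}, u_i)`; the choice of `i` forces `p ≠ j`, so
`x_p ∣ w' / gcd(w', w)`, and since the order on `G(J)` increases degrees, a minimal generator of
`mJ` dividing `x_p u_i` comes before `w`. So `mJ` again has linear quotients with respect to a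
degree-increasing order, and induction on `k` finishes the proof. -/

theorem Set.Finite.exists_range_eq_strictMono_comp {α β : Type*} [LinearOrder α] {S : Set β}
    (hS : S.Finite) {f : β → α} (hf : S.InjOn f) :
    ∃ (r : ℕ) (g : Fin r → β), Set.range g = S ∧ StrictMono (f ∘ g) := by
  classical
  set T := (hS.image f).toFinset
  let e := T.orderEmbOfFin rfl
  have he : ∀ s, ∃ x ∈ S, f x = e s := fun s =>
    (hS.image f).mem_toFinset.1 (T.orderEmbOfFin_mem rfl s)
  choose g hgS hfg using he
  refine ⟨T.card, g, Set.Subset.antisymm (Set.range_subset_iff.2 hgS) fun x hx => ?_,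
    (funext hfg : f ∘ g = e) ▸ e.strictMono⟩
  obtain ⟨s, hs⟩ : f x ∈ Set.range e := by
    rw [Finset.range_orderEmbOfFin]
    simpa [T] using ⟨x, hx, rfl⟩
  exact ⟨s, hf (hgS s) hx ((hfg s).trans hs)⟩

section Exponents

variable {n : ℕ}

lemma mdeg_add (a b : Expo n) : mdeg (a + b) = mdeg a + mdeg b :=
  map_add Finsupp.degree a b

lemma mdeg_single (j : Fin n) : mdeg (Finsupp.single j 1) = 1 :=
  Finsupp.degree_single j 1

lemma mdeg_strictMono : StrictMono (mdeg : Expo n → ℕ) := by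
  intro a b hab
  obtain ⟨c, rfl⟩ := exists_add_of_le hab.le
  have hc : mdeg c ≠ 0 := fun h => hab.ne (by rw [(Finsupp.degree_eq_zero_iff c).1 h, add_zero])
  rw [mdeg_add]
  omega

lemma eq_of_le_of_mdeg_le {a b : Expo n} (hab : a ≤ b) (h : mdeg b ≤ mdeg a) : a = b :=
  hab.eq_or_lt.resolve_right fun hlt => (mdeg_strictMono hlt).not_ge h

lemma lt_single_add (j : Fin n) (a : Expo n) : a < Finsupp.single j 1 + a :=
  lt_add_of_pos_left a (pos_iff_ne_zero.2 (Finsupp.single_ne_zero.2 one_ne_zero))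

lemma exists_single_add_le_of_lt {a b : Expo n} (hab : a < b) :
    ∃ j, Finsupp.single j 1 + a ≤ b := by
  obtain ⟨j, hj⟩ : ∃ j, a j < b j := by
    by_contra! h
    exact hab.not_ge (Finsupp.le_def.2 h)
  refine ⟨j, Finsupp.le_def.2 fun i => ?_⟩
  rcases eq_or_ne j i with rfl | hji
  · simp only [Finsupp.add_apply, Finsupp.single_eq_same]
    omega
  · simpa [Finsupp.single_eq_of_ne' hji] using hab.le i

lemma single_le_tsub_single_add {p j : Fin n} {a b c : Expo n} (hpj : p ≠ j)
    (hp : Finsupp.single p 1 ≤ b - a) (hbc : b ≤ c) :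
    Finsupp.single p 1 ≤ c - (Finsupp.single j 1 + a) := by
  rw [Finsupp.single_le_iff] at hp ⊢
  have := Finsupp.le_def.1 hbc p
  simp only [Finsupp.tsub_apply, Finsupp.add_apply, Finsupp.single_eq_of_ne hpj] at hp ⊢
  omega

end Exponents

section MonomialIdeals

variable {n : ℕ} {K : Type} [Field K]

lemma mon_mul (a b : Expo n) : mon n K a * mon n K b = mon n K (a + b) := by
  simp [mon, monomial_mul]

lemma X_eq_mon (j : Fin n) : (X j : MvPolynomial (Fin n) K) = mon n K (Finsupp.single j 1) :=
  rfl

lemma mon_mem_span_mon_iff {A : Set (Expo n)} {s : Expo n} :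
    mon n K s ∈ Ideal.span (mon n K '' A) ↔ ∃ a ∈ A, a ≤ s := by
  classical
  unfold mon
  simp [mem_ideal_span_monomial_image, support_monomial]

lemma exists_minGens_le {J : Ideal (MvPolynomial (Fin n) K)} {s : Expo n}
    (hs : mon n K s ∈ J) : ∃ g ∈ MinGens n K J, g ≤ s := by
  obtain ⟨g, ⟨hgJ, hgs⟩, hmin⟩ :=
    (wellFounded_lt (α := Expo n)).has_min {t | mon n K t ∈ J ∧ t ≤ s} ⟨s, hs, le_rfl⟩
  refine ⟨g, ⟨hgJ, fun t htJ htg => ?_⟩, hgs⟩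
  by_contra hne
  exact hmin t ⟨htJ, htg.trans hgs⟩ (htg.lt_of_ne hne)

lemma span_minGens {J : Ideal (MvPolynomial (Fin n) K)} (hJ : IsMonomialIdeal n K J) :
    J = Ideal.span (mon n K '' MinGens n K J) := by
  obtain ⟨A, rfl⟩ := hJ
  refine le_antisymm (Ideal.span_le.2 ?_) (Ideal.span_le.2 fun _ ⟨g, hg, hgs⟩ => hgs ▸ hg.1)
  rintro _ ⟨a, ha, rfl⟩
  obtain ⟨g, hg, hga⟩ :=
    exists_minGens_le (Ideal.subset_span (Set.mem_image_of_mem (mon n K) ha))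
  exact mon_mem_span_mon_iff.2 ⟨g, hg, hga⟩

lemma maxIdeal_mul_span_mon (B : Set (Expo n)) :
    maxIdeal n K * Ideal.span (mon n K '' B) =
      Ideal.span (mon n K '' Set.image2 (fun j b => Finsupp.single j 1 + b) Set.univ B) := by
  rw [maxIdeal, Ideal.span_mul_span']
  congr 1
  ext f
  simp only [Set.mem_mul, Set.mem_image, Set.mem_range, Set.mem_image2, Set.mem_univ, true_and]
  constructor
  · rintro ⟨_, ⟨j, rfl⟩, _, ⟨b, hb, rfl⟩, rfl⟩
    exact ⟨_, ⟨j, b, hb, rfl⟩, by rw [X_eq_mon, mon_mul]⟩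
  · rintro ⟨_, ⟨j, b, hb, rfl⟩, rfl⟩
    exact ⟨X j, ⟨j, rfl⟩, mon n K b, ⟨b, hb, rfl⟩, by rw [X_eq_mon, mon_mul]⟩

lemma IsMonomialIdeal.maxIdeal_mul {J : Ideal (MvPolynomial (Fin n) K)}
    (hJ : IsMonomialIdeal n K J) : IsMonomialIdeal n K (maxIdeal n K * J) := by
  obtain ⟨A, rfl⟩ := hJ
  exact ⟨_, maxIdeal_mul_span_mon A⟩

lemma IsMonomialIdeal.maxIdeal_pow_mul {J : Ideal (MvPolynomial (Fin n) K)}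
    (hJ : IsMonomialIdeal n K J) (k : ℕ) : IsMonomialIdeal n K (maxIdeal n K ^ k * J) := by
  induction k with
  | zero => simpa using hJ
  | succ k ih => simpa [pow_succ', mul_assoc] using ih.maxIdeal_mul

lemma mon_mem_maxIdeal_mul_span_mon_iff {B : Set (Expo n)} {s : Expo n} :
    mon n K s ∈ maxIdeal n K * Ideal.span (mon n K '' B) ↔ ∃ b ∈ B, b < s := by
  rw [maxIdeal_mul_span_mon, mon_mem_span_mon_iff]
  constructor
  · rintro ⟨_, ⟨j, -, b, hb, rfl⟩, hle⟩
    exact ⟨b, hb, (lt_single_add j b).trans_le hle⟩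
  · rintro ⟨b, hb, hlt⟩
    obtain ⟨j, hj⟩ := exists_single_add_le_of_lt hlt
    exact ⟨_, ⟨j, Set.mem_univ j, b, hb, rfl⟩, hj⟩

end MonomialIdeals

section ColonIdeals

variable {n : ℕ} {K : Type} [Field K] {r : ℕ} {u : Fin r → Expo n} {i : Fin r}

lemma colon_span_mon_le (B : Set (Expo n)) (v : Expo n) :
    (Ideal.span (mon n K '' B)).colon (Ideal.span {mon n K v}) ≤
      Ideal.span (mon n K '' ((· - v) '' B)) := by
  unfold mon
  intro f hf
  rw [Ideal.mem_colon_span_singleton, mem_ideal_span_monomial_image] at hf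
  rw [mem_ideal_span_monomial_image]
  intro s hs
  have hsv : s + v ∈ (f * monomial v 1).support := by
    rwa [mem_support_iff, coeff_mul_monomial, mul_one, ← mem_support_iff]
  obtain ⟨b, hb, hble⟩ := hf _ hsv
  exact ⟨b - v, ⟨b, hb, rfl⟩, tsub_le_iff_right.2 hble⟩

lemma mon_mem_colonPrev_iff {s : Expo n} :
    mon n K s ∈ colonPrev n K u i ↔ ∃ l < i, u l ≤ s + u i := by
  rw [colonPrev, Ideal.mem_colon_span_singleton, mon_mul, mon_mem_span_mon_iff]
  simp

lemma genByVars_colonPrev_iff :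
    genByVars n K (colonPrev n K u i) ↔ ∀ l < i, ∃ p : Fin n,
      (X p : MvPolynomial (Fin n) K) ∈ colonPrev n K u i ∧
        Finsupp.single p 1 ≤ u l - u i := by
  constructor
  · rintro ⟨T, hT⟩ l hl
    have hmem : mon n K (u l - u i) ∈ colonPrev n K u i :=
      mon_mem_colonPrev_iff.2 ⟨l, hl, le_tsub_add⟩
    have hX : (fun p => (X p : MvPolynomial (Fin n) K)) '' T =
        mon n K '' ((Finsupp.single · 1) '' T) := by
      rw [Set.image_image]
      rfl
    rw [hT, hX, mon_mem_span_mon_iff] at hmem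
    obtain ⟨_, ⟨p, hp, rfl⟩, hle⟩ := hmem
    exact ⟨p, hT ▸ Ideal.subset_span ⟨p, hp, rfl⟩, hle⟩
  · intro h
    refine ⟨{p | X p ∈ colonPrev n K u i}, le_antisymm ?_ (Ideal.span_le.2 ?_)⟩
    · refine (colon_span_mon_le _ _).trans (Ideal.span_le.2 ?_)
      rintro _ ⟨_, ⟨_, ⟨l, hl, rfl⟩, rfl⟩, rfl⟩
      obtain ⟨p, hp, hle⟩ := h l hl
      change mon n K (u l - u i) ∈ _
      rw [SetLike.mem_coe, ← tsub_add_cancel_of_le hle, ← mon_mul, ← X_eq_mon]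
      exact Ideal.mul_mem_left _ _ (Ideal.subset_span ⟨p, hp, rfl⟩)
    · rintro _ ⟨p, hp, rfl⟩
      exact hp

end ColonIdeals

section MaxIdealMul

variable {n : ℕ} {K : Type} [Field K] {J : Ideal (MvPolynomial (Fin n) K)} {r : ℕ}
  {u : Fin r → Expo n} {w : Expo n} {i : Fin r}

lemma mon_mem_maxIdeal_mul_iff (hJ : IsMonomialIdeal n K J) (hu : Set.range u = MinGens n K J)
    {s : Expo n} : mon n K s ∈ maxIdeal n K * J ↔ ∃ i, u i < s := by
  rw [span_minGens hJ, ← hu, mon_mem_maxIdeal_mul_span_mon_iff, Set.exists_range_iff]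

lemma exists_eq_single_add_of_lt (hJ : IsMonomialIdeal n K J)
    (hu : Set.range u = MinGens n K J) (hw : w ∈ MinGens n K (maxIdeal n K * J)) (hi : u i < w) :
    ∃ j, w = Finsupp.single j 1 + u i := by
  obtain ⟨j, hj⟩ := exists_single_add_le_of_lt hi
  have hmem := (mon_mem_maxIdeal_mul_iff hJ hu).2 ⟨i, lt_single_add j (u i)⟩
  exact ⟨j, (hw.2 _ hmem hj).symm⟩

lemma minGens_maxIdeal_mul_finite (hJ : IsMonomialIdeal n K J)
    (hu : Set.range u = MinGens n K J) : (MinGens n K (maxIdeal n K * J)).Finite := by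
  refine (Set.finite_range fun q : Fin n × Fin r => Finsupp.single q.1 1 + u q.2).subset
    fun w hw => ?_
  obtain ⟨i, hi⟩ := (mon_mem_maxIdeal_mul_iff hJ hu).1 hw.1
  obtain ⟨j, rfl⟩ := exists_eq_single_add_of_lt hJ hu hw hi
  exact ⟨(j, i), rfl⟩

open Classical in
noncomputable def firstProperDivisor (u : Fin r → Expo n) (w : Expo n) : WithTop (Fin r) :=
  (Finset.univ.filter fun i => u i < w).min

lemma firstProperDivisor_le {l : Fin r} (h : u l < w) : firstProperDivisor u w ≤ l :=
  Finset.min_le (by simp [h])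

lemma lt_of_firstProperDivisor_eq (h : firstProperDivisor u w = i) : u i < w := by
  simpa using Finset.mem_of_min h

lemma exists_firstProperDivisor_eq (hJ : IsMonomialIdeal n K J)
    (hu : Set.range u = MinGens n K J) (hw : w ∈ MinGens n K (maxIdeal n K * J)) :
    ∃ i : Fin r, firstProperDivisor u w = i := by
  obtain ⟨i, hi⟩ := (mon_mem_maxIdeal_mul_iff hJ hu).1 hw.1
  exact Finset.min_of_nonempty ⟨i, by simp [hi]⟩

lemma mdeg_eq_of_firstProperDivisor_eq (hJ : IsMonomialIdeal n K J)
    (hu : Set.range u = MinGens n K J) (hw : w ∈ MinGens n K (maxIdeal n K * J))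
    (h : firstProperDivisor u w = i) : mdeg w = mdeg (u i) + 1 := by
  obtain ⟨j, rfl⟩ := exists_eq_single_add_of_lt hJ hu hw (lt_of_firstProperDivisor_eq h)
  rw [mdeg_add, mdeg_single, add_comm]

/-- The order on `G(mJ)` only has to refine `firstProperDivisor`; ties are broken by an
arbitrary linear order on exponent vectors. -/
noncomputable def linQuotKey (u : Fin r → Expo n) (w : Expo n) :
    WithTop (Fin r) ×ₗ Lex (Expo n) :=
  toLex (firstProperDivisor u w, toLex w)

lemma linQuotKey_injective : Function.Injective (linQuotKey u) := fun _ _ h =>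
  congrArg (fun x : WithTop (Fin r) ×ₗ Lex (Expo n) => ofLex (ofLex x).2) h

lemma mdeg_le_of_linQuotKey_le (hJ : IsMonomialIdeal n K J)
    (hu : Set.range u = MinGens n K J) (hd : DegIncr u) {w' : Expo n}
    (hw : w ∈ MinGens n K (maxIdeal n K * J)) (hw' : w' ∈ MinGens n K (maxIdeal n K * J))
    (h : linQuotKey u w ≤ linQuotKey u w') : mdeg w ≤ mdeg w' := by
  obtain ⟨i, hi⟩ := exists_firstProperDivisor_eq hJ hu hw
  obtain ⟨i', hi'⟩ := exists_firstProperDivisor_eq hJ hu hw'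
  have hii' : i ≤ i' := by simpa [linQuotKey, hi, hi'] using Prod.Lex.monotone_fst _ _ h
  rw [mdeg_eq_of_firstProperDivisor_eq hJ hu hw hi, mdeg_eq_of_firstProperDivisor_eq hJ hu hw' hi']
  exact Nat.add_le_add_right (hd i i' hii') 1

lemma exists_lt_single_add_of_X_mem_colonPrev (hd : DegIncr u) {p : Fin n}
    (hp : (X p : MvPolynomial (Fin n) K) ∈ colonPrev n K u i) :
    ∃ l < i, u l < Finsupp.single p 1 + u i := by
  rw [X_eq_mon, mon_mem_colonPrev_iff] at hp
  obtain ⟨l, hl, hle⟩ := hp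
  refine ⟨l, hl, hle.lt_of_ne fun h => ?_⟩
  have hdeg := congrArg mdeg h
  rw [mdeg_add, mdeg_single] at hdeg
  have := hd l i hl.le
  omega

lemma exists_minGens_firstProperDivisor_lt (hJ : IsMonomialIdeal n K J)
    (hu : Set.range u = MinGens n K J) (hd : DegIncr u) {p : Fin n}
    (hp : (X p : MvPolynomial (Fin n) K) ∈ colonPrev n K u i) :
    ∃ w ∈ MinGens n K (maxIdeal n K * J),
      firstProperDivisor u w < i ∧ w ≤ Finsupp.single p 1 + u i := by
  obtain ⟨l, hl, hlv⟩ := exists_lt_single_add_of_X_mem_colonPrev hd hp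
  obtain ⟨w, hw, hwv⟩ := exists_minGens_le ((mon_mem_maxIdeal_mul_iff hJ hu).2 ⟨l, hlv⟩)
  refine ⟨w, hw, ?_, hwv⟩
  obtain ⟨i', hi'⟩ := exists_firstProperDivisor_eq hJ hu hw
  rw [hi', WithTop.coe_lt_coe]
  by_contra! hii'
  -- `i ≤ i'` makes `deg w ≥ deg (x_p u_i)`, so `w = x_p u_i`, which `u_l` properly divides
  have hdeg : mdeg (Finsupp.single p 1 + u i) ≤ mdeg w := by
    rw [mdeg_eq_of_firstProperDivisor_eq hJ hu hw hi', mdeg_add, mdeg_single, add_comm]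
    exact Nat.add_le_add_right (hd i i' hii') 1
  have hil := firstProperDivisor_le hlv
  rw [← eq_of_le_of_mdeg_le hwv hdeg, hi', WithTop.coe_le_coe] at hil
  exact hl.not_ge (hii'.trans hil)

lemma exists_colon_var_of_linQuotKey_lt (hJ : IsMonomialIdeal n K J)
    (hu : IsLinQuotOrder n K J u) (hd : DegIncr u) {w' : Expo n}
    (hw' : w' ∈ MinGens n K (maxIdeal n K * J)) (hw : w ∈ MinGens n K (maxIdeal n K * J))
    (hlt : linQuotKey u w' < linQuotKey u w) :
    ∃ p : Fin n, (∃ w'' ∈ MinGens n K (maxIdeal n K * J),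
      linQuotKey u w'' < linQuotKey u w ∧ w'' ≤ Finsupp.single p 1 + w) ∧
      Finsupp.single p 1 ≤ w' - w := by
  obtain ⟨i, hi⟩ := exists_firstProperDivisor_eq hJ hu.2.1 hw
  obtain ⟨i', hi'⟩ := exists_firstProperDivisor_eq hJ hu.2.1 hw'
  obtain ⟨j, hj⟩ := exists_eq_single_add_of_lt hJ hu.2.1 hw (lt_of_firstProperDivisor_eq hi)
  obtain ⟨j', hj'⟩ := exists_eq_single_add_of_lt hJ hu.2.1 hw' (lt_of_firstProperDivisor_eq hi')
  rcases Prod.Lex.toLex_lt_toLex.1 hlt with hii' | ⟨hii', hww'⟩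
  · rw [hi, hi', WithTop.coe_lt_coe] at hii'
    obtain ⟨p, hp, hpw'⟩ := genByVars_colonPrev_iff.1 (hu.2.2 i) i' hii'
    have hpj : p ≠ j := by
      rintro rfl
      obtain ⟨l, hl, hlw⟩ := exists_lt_single_add_of_X_mem_colonPrev hd hp
      have hil := firstProperDivisor_le (hj ▸ hlw)
      rw [hi, WithTop.coe_le_coe] at hil
      exact hl.not_ge hil
    obtain ⟨w'', hw'', hi'', hw''p⟩ := exists_minGens_firstProperDivisor_lt hJ hu.2.1 hd hp
    refine ⟨p, ⟨w'', hw'', Prod.Lex.toLex_lt_toLex.2 (Or.inl (hi ▸ hi'')), ?_⟩, ?_⟩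
    · rw [hj]
      exact hw''p.trans (add_le_add le_rfl le_add_self)
    · rw [hj]
      exact single_le_tsub_single_add hpj hpw' (hj' ▸ le_add_self)
  · rw [hi, hi', WithTop.coe_inj] at hii'
    subst hii'
    have hjj' : j' ≠ j := by
      rintro rfl
      exact hww'.ne (congrArg toLex (hj'.trans hj.symm))
    refine ⟨j', ⟨w', hw', hlt, ?_⟩, ?_⟩
    · rw [hj', hj]
      exact add_le_add le_rfl le_add_self
    · rw [hj', hj]
      exact single_le_tsub_single_add hjj' (by rw [add_tsub_cancel_right]) le_rfl

theorem exists_isLinQuotOrder_maxIdeal_mul (hJ : IsMonomialIdeal n K J)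
    (hu : IsLinQuotOrder n K J u) (hd : DegIncr u) :
    ∃ (r' : ℕ) (u' : Fin r' → Expo n),
      IsLinQuotOrder n K (maxIdeal n K * J) u' ∧ DegIncr u' := by
  obtain ⟨r', g, hg, hmono⟩ :=
    (minGens_maxIdeal_mul_finite hJ hu.2.1).exists_range_eq_strictMono_comp
      (linQuotKey_injective.injOn (f := linQuotKey u))
  have hgG : ∀ s, g s ∈ MinGens n K (maxIdeal n K * J) := fun s => hg ▸ Set.mem_range_self s
  have hdeg : DegIncr g := fun s s' hss =>
    mdeg_le_of_linQuotKey_le hJ hu.2.1 hd (hgG s) (hgG s') (hmono.monotone hss)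
  refine ⟨r', g, ⟨hmono.injective.of_comp, hg, fun s => ?_⟩, hdeg⟩
  refine genByVars_colonPrev_iff.2 fun l hl => ?_
  obtain ⟨p, ⟨w, hw, hlt, hwp⟩, hp⟩ :=
    exists_colon_var_of_linQuotKey_lt hJ hu hd (hgG l) (hgG s) (hmono hl)
  rw [← hg] at hw
  obtain ⟨l', rfl⟩ := hw
  refine ⟨p, ?_, hp⟩
  rw [X_eq_mon, mon_mem_colonPrev_iff]
  exact ⟨l', hmono.lt_iff_lt.1 hlt, hwp⟩

end MaxIdealMul

/-- **(Ficarra–Herzog–Moradi, proof of Theorem 1.5).** If `m^t I` has linear quotients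
with respect to a degree-increasing admissible order on `G(m^t I)` for some `t ≥ 0`,
then `m^k I` has linear quotients for all `k ≥ t`. -/
theorem linear_quotients_propagate (n : ℕ) (K : Type) [Field K]
    (I : Ideal (MvPolynomial (Fin n) K)) (hI : IsMonomialIdeal n K I) (t : ℕ)
    (h : ∃ (r : ℕ) (u : Fin r → Expo n),
      IsLinQuotOrder n K (maxIdeal n K ^ t * I) u ∧ DegIncr u) :
    ∀ k : ℕ, t ≤ k → HasLinearQuotients n K (maxIdeal n K ^ k * I) := by
  intro k hk
  suffices ∃ (r : ℕ) (u : Fin r → Expo n),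
      IsLinQuotOrder n K (maxIdeal n K ^ k * I) u ∧ DegIncr u by
    obtain ⟨r, u, hu, -⟩ := this
    exact ⟨r, u, hu⟩
  induction k, hk using Nat.le_induction with
  | base => exact h
  | succ k _ ih =>
    obtain ⟨r, u, hu, hd⟩ := ih
    rw [pow_succ', mul_assoc]
    exact exists_isLinQuotOrder_maxIdeal_mul (hI.maxIdeal_pow_mul k) hu hd
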